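/- arXiv:1407.5374 — 5 statements merged into one kernel-verified Lean document; each statement's English description precedes it below -/
import Mathlib

section
/- Let X_1, ..., X_l be mutually independent random variables on a common probability space, and let E_1, ..., E_m be events such that each E_j is measurable with respect to the sigma-algebra generated by the variables in its scope e^j ⊆ {1,...,l}. Let Δ ≥ 2 be the maximum over j of the number of indices k (including j itself) with e^k ∩ e^j ≠ ∅, and let p be the maximum over j of Pr[E_j]. If (1 + 1/(Δ-1))^{Δ-1} · p · Δ < 1, then Pr[no E_j occurs] > 0; in particular there exists an assignment of values to X_1,...,X_l for which none of the events E_1,...,E_m holds. -/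
open MeasureTheory ProbabilityTheory

section Aux

variable {Ω : Type*} [MeasurableSpace Ω] {μ : Measure Ω} [IsProbabilityMeasure μ]
  {m : ℕ} {E : Fin m → Set Ω}

lemma lll_split (hE : ∀ j, MeasurableSet (E j)) (j : Fin m) (T : Set Ω) :
    (μ ((E j)ᶜ ∩ T)).toReal = (μ T).toReal - (μ (E j ∩ T)).toReal := by
  have h1 : μ (T ∩ E j) + μ (T \ E j) = μ T := measure_inter_add_diff T (hE j)
  have h2 : (μ (T ∩ E j)).toReal + (μ (T \ E j)).toReal = (μ T).toReal := by
    rw [← ENNReal.toReal_add (measure_ne_top _ _) (measure_ne_top _ _), h1]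
  have e1 : (E j)ᶜ ∩ T = T \ E j := by ext ω; simp [Set.mem_diff, and_comm]
  have e2 : E j ∩ T = T ∩ E j := Set.inter_comm _ _
  rw [e1, e2]; linarith

lemma lll_aux (hE : ∀ j, MeasurableSet (E j))
    {x : ℝ} (hx0 : 0 ≤ x) (hx1 : x < 1)
    {N : Fin m → Finset (Fin m)} {d : ℕ}
    (hcard : ∀ j, ((N j).erase j).card ≤ d)
    (hpE : ∀ j, (μ (E j)).toReal ≤ x * (1 - x) ^ d)
    (hind : ∀ (j : Fin m) (S₂ : Finset (Fin m)), (∀ k ∈ S₂, k ∉ N j) →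
      μ (E j ∩ ⋂ k ∈ S₂, (E k)ᶜ) = μ (E j) * μ (⋂ k ∈ S₂, (E k)ᶜ)) :
    ∀ (S : Finset (Fin m)) (j : Fin m),
      (μ (E j ∩ ⋂ k ∈ S, (E k)ᶜ)).toReal ≤ x * (μ (⋂ k ∈ S, (E k)ᶜ)).toReal := by
  intro S
  induction S using Finset.strongInductionOn with
  | _ S ih =>
    intro j
    by_cases hjS : j ∈ S
    · have hsub : E j ∩ ⋂ k ∈ S, (E k)ᶜ ⊆ ∅ := by
        intro ω hω
        exact (Set.mem_iInter₂.mp hω.2 j hjS) hω.1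
      have : μ (E j ∩ ⋂ k ∈ S, (E k)ᶜ) = 0 :=
        le_antisymm ((measure_mono hsub).trans (by simp)) zero_le
      rw [this]
      simpa using mul_nonneg hx0 ENNReal.toReal_nonneg
    · set S₁ : Finset (Fin m) := S ∩ N j with hS₁
      set S₂ : Finset (Fin m) := S \ N j with hS₂
      have hS₂N : ∀ k ∈ S₂, k ∉ N j := fun k hk => (Finset.mem_sdiff.mp hk).2
      have hUnion : S₁ ∪ S₂ = S := by rw [hS₁, hS₂, Finset.union_comm, Finset.sdiff_union_inter]
      have hS₁d : S₁.card ≤ d := by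
        refine le_trans (Finset.card_le_card ?_) (hcard j)
        intro k hk
        rcases Finset.mem_inter.mp hk with ⟨hkS, hkN⟩
        exact Finset.mem_erase.mpr ⟨fun h => hjS (h ▸ hkS), hkN⟩
      have hx1' : (0:ℝ) < 1 - x := by linarith
      -- peeling
      have peel : ∀ U : Finset (Fin m), U ⊆ S₁ →
          (1 - x) ^ U.card * (μ (⋂ k ∈ S₂, (E k)ᶜ)).toReal ≤
            (μ (⋂ k ∈ U ∪ S₂, (E k)ᶜ)).toReal := by
        intro U
        induction U using Finset.induction_on with
        | empty => simp
        | @insert k U' hkU' ih2 =>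
          intro hsub
          have hU'sub : U' ⊆ S₁ := (Finset.insert_subset_iff.mp hsub).2
          have hkS₁ : k ∈ S₁ := (Finset.insert_subset_iff.mp hsub).1
          have hkS : k ∈ S := Finset.mem_of_mem_inter_left hkS₁
          have hkU'S₂ : k ∉ U' ∪ S₂ := by
            simp only [Finset.mem_union, not_or]
            refine ⟨hkU', fun h => (Finset.mem_sdiff.mp h).2 (Finset.mem_of_mem_inter_right hkS₁)⟩
          have hVS : U' ∪ S₂ ⊂ S := by
            refine Finset.ssubset_iff_of_subset ?_ |>.mpr ⟨k, hkS, hkU'S₂⟩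
            exact Finset.union_subset (hU'sub.trans Finset.inter_subset_left)
              (Finset.sdiff_subset)
          have hrw : insert k U' ∪ S₂ = insert k (U' ∪ S₂) := by
            rw [Finset.insert_union]
          have hinter : ⋂ i ∈ insert k U' ∪ S₂, (E i)ᶜ =
              (E k)ᶜ ∩ ⋂ i ∈ U' ∪ S₂, (E i)ᶜ := by
            rw [hrw, Finset.set_biInter_insert]
          have hmain := ih (U' ∪ S₂) hVS k
          have hsplit := lll_split (μ := μ) hE k (⋂ i ∈ U' ∪ S₂, (E i)ᶜ)
          have hih2 := ih2 hU'sub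
          rw [hinter, hsplit, Finset.card_insert_of_notMem hkU']
          have hT2 : (0:ℝ) ≤ (μ (⋂ k ∈ S₂, (E k)ᶜ)).toReal := ENNReal.toReal_nonneg
          calc (1 - x) ^ (U'.card + 1) * (μ (⋂ k ∈ S₂, (E k)ᶜ)).toReal
              = (1 - x) * ((1 - x) ^ U'.card * (μ (⋂ k ∈ S₂, (E k)ᶜ)).toReal) := by ring
            _ ≤ (1 - x) * (μ (⋂ i ∈ U' ∪ S₂, (E i)ᶜ)).toReal :=
                mul_le_mul_of_nonneg_left hih2 (le_of_lt hx1')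
            _ ≤ (μ (⋂ i ∈ U' ∪ S₂, (E i)ᶜ)).toReal - (μ (E k ∩ ⋂ i ∈ U' ∪ S₂, (E i)ᶜ)).toReal := by
                have := hmain
                nlinarith [ENNReal.toReal_nonneg (a := μ (⋂ i ∈ U' ∪ S₂, (E i)ᶜ))]
      -- main chain
      have hmono : (μ (E j ∩ ⋂ k ∈ S, (E k)ᶜ)).toReal ≤
          (μ (E j ∩ ⋂ k ∈ S₂, (E k)ᶜ)).toReal := by
        refine ENNReal.toReal_mono (measure_ne_top _ _) (measure_mono ?_)
        refine Set.inter_subset_inter_right _ ?_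
        intro ω hω
        refine Set.mem_iInter₂.mpr fun k hk => Set.mem_iInter₂.mp hω k (Finset.sdiff_subset hk)
      have hprod : (μ (E j ∩ ⋂ k ∈ S₂, (E k)ᶜ)).toReal =
          (μ (E j)).toReal * (μ (⋂ k ∈ S₂, (E k)ᶜ)).toReal := by
        rw [hind j S₂ hS₂N, ENNReal.toReal_mul]
      have hT2 : (0:ℝ) ≤ (μ (⋂ k ∈ S₂, (E k)ᶜ)).toReal := ENNReal.toReal_nonneg
      have hpow : (1 - x) ^ d ≤ (1 - x) ^ S₁.card :=
        pow_le_pow_of_le_one (le_of_lt hx1') (by linarith) hS₁d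
      have hfinal : (μ (E j ∩ ⋂ k ∈ S, (E k)ᶜ)).toReal ≤
          x * ((1 - x) ^ S₁.card * (μ (⋂ k ∈ S₂, (E k)ᶜ)).toReal) := by
        rw [hprod] at hmono
        calc (μ (E j ∩ ⋂ k ∈ S, (E k)ᶜ)).toReal
            ≤ (μ (E j)).toReal * (μ (⋂ k ∈ S₂, (E k)ᶜ)).toReal := hmono
          _ ≤ (x * (1 - x) ^ d) * (μ (⋂ k ∈ S₂, (E k)ᶜ)).toReal :=
              mul_le_mul_of_nonneg_right (hpE j) hT2
          _ ≤ (x * (1 - x) ^ S₁.card) * (μ (⋂ k ∈ S₂, (E k)ᶜ)).toReal := by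
              refine mul_le_mul_of_nonneg_right ?_ hT2
              exact mul_le_mul_of_nonneg_left hpow hx0
          _ = x * ((1 - x) ^ S₁.card * (μ (⋂ k ∈ S₂, (E k)ᶜ)).toReal) := by ring
      refine hfinal.trans (mul_le_mul_of_nonneg_left ?_ hx0)
      have := peel S₁ (subset_refl _)
      rwa [hUnion] at this

end Aux

section Aux2
variable {Ω : Type*} [MeasurableSpace Ω] {μ : Measure Ω} [IsProbabilityMeasure μ]
  {m : ℕ} {E : Fin m → Set Ω}

lemma lll_pos (hE : ∀ j, MeasurableSet (E j)) {x : ℝ} (hx1 : x < 1)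
    (haux : ∀ (S : Finset (Fin m)) (j : Fin m),
      (μ (E j ∩ ⋂ k ∈ S, (E k)ᶜ)).toReal ≤ x * (μ (⋂ k ∈ S, (E k)ᶜ)).toReal) :
    ∀ S : Finset (Fin m), 0 < (μ (⋂ k ∈ S, (E k)ᶜ)).toReal := by
  intro S
  induction S using Finset.induction_on with
  | empty => simp
  | @insert k S hk ihS =>
    rw [Finset.set_biInter_insert, lll_split (μ := μ) hE k]
    have h1 := haux S k
    nlinarith [ihS]

end Aux2


/-- **Improved symmetric Lovász Local Lemma** (variable setting).
If `X i` are mutually independent random variables, each event `E j` is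
measurable w.r.t. the σ-algebra generated by the variables in its scope,
`Δ ≥ 2` bounds the number of events whose scope meets the scope of any given
event (including itself), `p` bounds the probability of every event, and
`(1 + 1/(Δ-1))^(Δ-1)·p·Δ < 1`, then with positive probability none of the
events occurs; in particular some outcome avoids all events. -/
theorem lll_symmetric_improved
    {Ω : Type*} [MeasurableSpace Ω] (μ : Measure Ω) [IsProbabilityMeasure μ]
    {l m : ℕ} {α : Fin l → Type*} (mα : ∀ i, MeasurableSpace (α i))
    (X : ∀ i, Ω → α i) (hXmeas : ∀ i, Measurable (X i))
    (hindep : @iIndepFun _ _ _ _ mα X μ)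
    (E : Fin m → Set Ω) (scope : Fin m → Finset (Fin l))
    (hmeas : ∀ j, MeasurableSet[⨆ i ∈ (scope j : Set (Fin l)),
        (mα i).comap (X i)] (E j))
    (Δ : ℕ) (hΔ2 : 2 ≤ Δ) (p : ℝ)
    (hΔ : ∀ j, (Finset.univ.filter
        fun k => ((scope k) ∩ (scope j)).Nonempty).card ≤ Δ)
    (hp : ∀ j, (μ (E j)).toReal ≤ p)
    (h : (1 + 1 / ((Δ : ℝ) - 1)) ^ (Δ - 1) * p * (Δ : ℝ) < 1) :
    0 < μ (⋂ j, (E j)ᶜ) ∧ ∃ ω : Ω, ∀ j, ω ∉ E j := by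
  have h_le : ∀ i, (mα i).comap (X i) ≤ ‹MeasurableSpace Ω› :=
    fun i => (hXmeas i).comap_le
  have hE : ∀ j, MeasurableSet (E j) := by
    intro j
    refine (iSup_le fun i => iSup_le fun _ => h_le i : _ ≤ _) _ (hmeas j)
  set D : ℝ := (Δ : ℝ) with hD
  have hD2 : (2:ℝ) ≤ D := by rw [hD]; exact_mod_cast hΔ2
  have hD0 : (0:ℝ) < D := by linarith
  have hD1 : (0:ℝ) < D - 1 := by linarith
  set x : ℝ := 1 / D with hx
  have hx0 : 0 < x := by positivity
  have hx1 : x < 1 := by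
    rw [hx, div_lt_one hD0]
    linarith
  -- p < x (1-x)^(Δ-1)
  have h1 : (1 - x) * (1 + 1 / (D - 1)) = 1 := by
    rw [hx]; field_simp; ring
  have hC : (0:ℝ) < (1 + 1 / (D - 1)) ^ (Δ - 1) * D := by positivity
  have h2 : x * (1 - x) ^ (Δ - 1) * ((1 + 1 / (D - 1)) ^ (Δ - 1) * D) = 1 := by
    have hpow : (1 - x) ^ (Δ - 1) * (1 + 1 / (D - 1)) ^ (Δ - 1) = 1 := by
      rw [← mul_pow, h1, one_pow]
    calc x * (1 - x) ^ (Δ - 1) * ((1 + 1 / (D - 1)) ^ (Δ - 1) * D)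
        = ((1 - x) ^ (Δ - 1) * (1 + 1 / (D - 1)) ^ (Δ - 1)) * (x * D) := by ring
      _ = x * D := by rw [hpow, one_mul]
      _ = 1 := by rw [hx]; field_simp
  have h3 : p * ((1 + 1 / (D - 1)) ^ (Δ - 1) * D) < 1 := by
    calc p * ((1 + 1 / (D - 1)) ^ (Δ - 1) * D)
        = (1 + 1 / (D - 1)) ^ (Δ - 1) * p * D := by ring
      _ < 1 := h
  have hplt : p < x * (1 - x) ^ (Δ - 1) := by
    have h4 : p * ((1 + 1 / (D - 1)) ^ (Δ - 1) * D) <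
        x * (1 - x) ^ (Δ - 1) * ((1 + 1 / (D - 1)) ^ (Δ - 1) * D) := by
      rw [h2]; exact h3
    exact lt_of_mul_lt_mul_right h4 (le_of_lt hC)
  -- neighbor sets
  set N : Fin m → Finset (Fin m) :=
    fun j => Finset.univ.filter fun k => ((scope k) ∩ (scope j)).Nonempty with hN
  have hcard : ∀ j, ((N j).erase j).card ≤ Δ - 1 := by
    intro j
    by_cases hsc : (scope j).Nonempty
    · have hjN : j ∈ N j := by
        simp only [hN, Finset.mem_filter, Finset.mem_univ, true_and, Finset.inter_self]
        exact hsc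
      have h5 : (N j).card ≤ Δ := hΔ j
      have h6 := Finset.card_erase_of_mem hjN
      omega
    · have : N j = ∅ := by
        rw [Finset.not_nonempty_iff_eq_empty] at hsc
        ext k
        simp [hN, hsc]
      simp [this]
  have hpE : ∀ j, (μ (E j)).toReal ≤ x * (1 - x) ^ (Δ - 1) :=
    fun j => (hp j).trans (le_of_lt hplt)
  -- independence
  have hind : ∀ (j : Fin m) (S₂ : Finset (Fin m)), (∀ k ∈ S₂, k ∉ N j) →
      μ (E j ∩ ⋂ k ∈ S₂, (E k)ᶜ) = μ (E j) * μ (⋂ k ∈ S₂, (E k)ᶜ) := by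
    intro j S₂ hS₂
    have hIndep : Indep (⨆ i ∈ (scope j : Set (Fin l)), (mα i).comap (X i))
        (⨆ i ∈ ((scope j : Set (Fin l)))ᶜ, (mα i).comap (X i)) μ :=
      indep_iSup_of_disjoint h_le hindep disjoint_compl_right
    have hright : MeasurableSet[⨆ i ∈ ((scope j : Set (Fin l)))ᶜ, (mα i).comap (X i)]
        (⋂ k ∈ S₂, (E k)ᶜ) := by
      refine Finset.measurableSet_biInter S₂ fun k hk => ?_
      have hdisj : (scope k : Set (Fin l)) ⊆ ((scope j : Set (Fin l)))ᶜ := by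
        intro i hi
        intro hij
        have hnon : ((scope k) ∩ (scope j)).Nonempty :=
          ⟨i, Finset.mem_inter.mpr ⟨by exact_mod_cast hi, by exact_mod_cast hij⟩⟩
        exact hS₂ k hk (by simp [hN, hnon])
      have hle2 : (⨆ i ∈ (scope k : Set (Fin l)), (mα i).comap (X i)) ≤
          ⨆ i ∈ ((scope j : Set (Fin l)))ᶜ, (mα i).comap (X i) :=
        biSup_mono hdisj
      exact hle2 _ (hmeas k).compl
    exact (Indep_iff _ _ _).mp hIndep _ _ (hmeas j) hright
  have haux := lll_aux (μ := μ) hE (le_of_lt hx0) hx1 hcard hpE hind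
  have hposS := lll_pos (μ := μ) hE hx1 haux Finset.univ
  have heq : (⋂ j, (E j)ᶜ) = ⋂ k ∈ Finset.univ, (E k)ᶜ := by simp
  have hμpos : 0 < μ (⋂ j, (E j)ᶜ) := by
    rw [heq]
    rcases eq_or_ne (μ (⋂ k ∈ Finset.univ, (E k)ᶜ)) 0 with h0 | h0
    · rw [h0] at hposS; simp at hposS
    · exact pos_iff_ne_zero.mpr h0
  refine ⟨hμpos, ?_⟩
  obtain ⟨ω, hω⟩ := nonempty_of_measure_ne_zero hμpos.ne'
  exact ⟨ω, fun j => Set.mem_iInter.mp hω j⟩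
end

section
/- Over a field of characteristic zero (e.g. the reals), let p be a scalar and Δ ≥ 2 an integer. If W is a formal power series in z with constant term 0 satisfying the equation W = p · z · (W + 1)^Δ, then for every n ≥ 1 the coefficient of z^n in W equals (1/n) · p^n · binomial(Δn, n-1). -/
open Finset PowerSeries

lemma lagrange_key_nat (N m n : ℕ) (hn : 1 ≤ n) :
    (N + m) * ∑ i ∈ Finset.range n, (i+1) * m.choose (i+1) * N.choose (n - (i+1)) =
      m * n * (N + m).choose n := by
  cases m with
  | zero =>
    have : ∀ i ∈ Finset.range n, (i+1) * Nat.choose 0 (i+1) * N.choose (n - (i+1)) = 0 := by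
      intro i _; simp [Nat.choose_eq_zero_of_lt (Nat.succ_pos i)]
    rw [Finset.sum_congr rfl this]
    simp
  | succ m' =>
    have hsum : ∑ i ∈ Finset.range n, (i+1) * (m'+1).choose (i+1) * N.choose (n - (i+1)) =
        (m'+1) * (m' + N).choose (n-1) := by
      have h1 : ∀ i ∈ Finset.range n, (i+1) * (m'+1).choose (i+1) * N.choose (n - (i+1)) =
          (m'+1) * (m'.choose i * N.choose (n - 1 - i)) := by
        intro i _
        have := Nat.add_one_mul_choose_eq m' i
        have h2 : n - 1 - i = n - (i+1) := by omega
        rw [h2]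
        calc (i+1) * (m'+1).choose (i+1) * N.choose (n - (i+1))
            = ((m'+1).choose (i+1) * (i+1)) * N.choose (n - (i+1)) := by ring
          _ = ((m'+1) * m'.choose i) * N.choose (n - (i+1)) := by
              rw [← this]
          _ = (m'+1) * (m'.choose i * N.choose (n - (i+1))) := by ring
      rw [Finset.sum_congr rfl h1, ← Finset.mul_sum]
      congr 1
      rw [Nat.add_choose_eq m' N (n-1), Finset.Nat.sum_antidiagonal_eq_sum_range_succ_mk]
      simp only [Nat.succ_eq_add_one]
      have h : n - 1 + 1 = n := by omega
      rw [h]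
    rw [hsum]
    have h3 := Nat.add_one_mul_choose_eq (m' + N) (n-1)
    have h4 : n - 1 + 1 = n := by omega
    rw [h4] at h3
    have : N + (m'+1) = (m'+N) + 1 := by omega
    rw [this]
    calc (m' + N + 1) * ((m'+1) * (m' + N).choose (n-1))
        = (m'+1) * ((m'+N+1) * (m'+N).choose (n-1)) := by ring
      _ = (m'+1) * ((m'+N+1).choose n * n) := by rw [h3]
      _ = (m'+1) * n * (m'+N+1).choose n := by ring

lemma lagrange_rec {K : Type*} [Field K] (p : K) (Δ : ℕ) (W : PowerSeries K)
    (hW : W = PowerSeries.C p * PowerSeries.X * (W + 1) ^ Δ) (n m : ℕ) :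
    PowerSeries.coeff n ((W+1)^m) =
      ∑ k ∈ Finset.range (n+1), (m.choose k : K) * p^k * PowerSeries.coeff (n-k) ((W+1)^(Δ*k)) := by
  set t : ℕ → K := fun k => (m.choose k : K) * p^k * PowerSeries.coeff (n-k) ((W+1)^(Δ*k)) with ht
  have step : PowerSeries.coeff n ((W+1)^m) =
      ∑ k ∈ Finset.range (m+1), (if k ≤ n then t k else 0) := by
    conv_lhs => rw [hW]
    rw [add_pow, map_sum]
    refine Finset.sum_congr rfl fun k _ => ?_
    have hterm : (PowerSeries.C p * PowerSeries.X * (W+1)^Δ)^k * 1^(m-k) * ((m.choose k : ℕ) : PowerSeries K) =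
        (PowerSeries.C ((m.choose k : K) * p^k) * (W+1)^(Δ*k)) * PowerSeries.X^k := by
      rw [← map_natCast (PowerSeries.C (R := K)) (m.choose k), one_pow, mul_pow, mul_pow,
        ← pow_mul, map_mul, ← map_pow]
      ring
    rw [hterm, PowerSeries.coeff_mul_X_pow']
    simp only [ht]
    split_ifs with h
    · rw [PowerSeries.coeff_C_mul]
    · rfl
  rw [step]
  calc ∑ k ∈ Finset.range (m+1), (if k ≤ n then t k else 0)
      = ∑ k ∈ Finset.range (m+n+1), (if k ≤ n then t k else 0) := by
        refine Finset.sum_subset (Finset.range_subset_range.2 (by omega)) (fun x _ hx => ?_)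
        have hmx : m < x := by
          by_contra hc
          exact hx (Finset.mem_range.2 (by omega))
        simp [ht, Nat.choose_eq_zero_of_lt hmx]
    _ = ∑ k ∈ Finset.range (n+1), (if k ≤ n then t k else 0) := by
        refine (Finset.sum_subset (Finset.range_subset_range.2 (by omega)) (fun x _ hx => ?_)).symm
        exact if_neg (fun h => hx (Finset.mem_range.2 (by omega)))
    _ = ∑ k ∈ Finset.range (n+1), t k :=
        Finset.sum_congr rfl fun k hk => if_pos (by simpa [Nat.lt_succ_iff] using hk)

lemma lagrange_key {K : Type*} [Field K] [CharZero K]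
    (p : K) (Δ : ℕ) (hΔ : 2 ≤ Δ) (W : PowerSeries K)
    (h0 : PowerSeries.constantCoeff W = 0)
    (hW : W = PowerSeries.C p * PowerSeries.X * (W + 1) ^ Δ) :
    ∀ n : ℕ, 1 ≤ n → ∀ m : ℕ,
      PowerSeries.coeff n ((W+1)^m) =
        (m : K) / ((Δ*n+m : ℕ) : K) * p^n * (((Δ*n+m).choose n : ℕ) : K) := by
  intro n
  induction n using Nat.strong_induction_on with
  | _ n IH =>
    intro hn m
    have hc1 : PowerSeries.constantCoeff (W + 1) = 1 := by
      rw [map_add, h0, map_one, zero_add]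
    have hΔn0 : Δ * n ≠ 0 := by positivity
    have hB : ((Δ*n : ℕ) : K) ≠ 0 := Nat.cast_ne_zero.2 hΔn0
    have hA : ((Δ*n+m : ℕ) : K) ≠ 0 := Nat.cast_ne_zero.2 (by omega)
    have hΔK : (Δ:K) ≠ 0 := Nat.cast_ne_zero.2 (by omega)
    have hnK : (n:K) ≠ 0 := Nat.cast_ne_zero.2 (by omega)
    rw [lagrange_rec p Δ W hW n m, Finset.sum_range_succ']
    have hf0 : (m.choose 0 : K) * p^0 * PowerSeries.coeff (n-0) ((W+1)^(Δ*0)) = 0 := by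
      have : n - 0 = n := rfl
      simp only [Nat.sub_zero, Nat.mul_zero, pow_zero, pow_zero, mul_one, one_mul,
        PowerSeries.coeff_one, if_neg (by omega : ¬ n = 0), mul_zero]
    rw [hf0, add_zero]
    have hterm : ∀ i ∈ Finset.range n,
        (m.choose (i+1) : K) * p^(i+1) * PowerSeries.coeff (n-(i+1)) ((W+1)^(Δ*(i+1))) =
        ((Δ:K) * ((Δ*n : ℕ):K)⁻¹ * p^n) *
          ((((i+1) * m.choose (i+1) * (Δ*n).choose (n-(i+1))) : ℕ) : K) := by
      intro i hi
      have hik : i + 1 ≤ n := Finset.mem_range.1 hi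
      have hpow : p^(i+1) * p^(n-(i+1)) = p^n := by
        rw [← pow_add]; congr 1; omega
      rcases Nat.eq_zero_or_pos (n - (i+1)) with hr | hr
      · -- i + 1 = n
        have hin : i + 1 = n := by omega
        rw [hr]
        have : PowerSeries.coeff 0 ((W+1)^(Δ*(i+1))) = 1 := by
          rw [PowerSeries.coeff_zero_eq_constantCoeff, map_pow, hc1, one_pow]
        rw [this, hin, Nat.choose_zero_right, Nat.mul_one, mul_one]
        push_cast
        field_simp
      · have hlt : n - (i+1) < n := by omega
        rw [IH (n-(i+1)) hlt hr (Δ*(i+1))]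
        have hNeq : Δ*(n-(i+1)) + Δ*(i+1) = Δ*n := by
          rw [← Nat.mul_add]; congr 1; omega
        rw [hNeq, div_eq_mul_inv]
        push_cast
        rw [← hpow]
        ring
    rw [Finset.sum_congr rfl hterm, ← Finset.mul_sum, ← Nat.cast_sum]
    have hS := congrArg (Nat.cast : ℕ → K) (lagrange_key_nat (Δ*n) m n hn)
    push_cast at hS hA ⊢
    have hSval : ((∑ i ∈ Finset.range n,
        (i+1) * m.choose (i+1) * (Δ*n).choose (n-(i+1)) : ℕ) : K) =
        (m:K) * (n:K) * (((Δ*n+m).choose n : ℕ) : K) * ((Δ:K)*(n:K)+(m:K))⁻¹ := by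
      rw [eq_mul_inv_iff_mul_eq₀ hA]
      push_cast
      linear_combination hS
    push_cast at hSval
    rw [hSval]
    field_simp

/-- Lagrange inversion computation: over a field of characteristic zero, if a
formal power series `W` with zero constant term satisfies
`W = p·z·(W+1)^Δ`, then for `n ≥ 1` the coefficient of `zⁿ` in `W` equals
`(1/n)·pⁿ·C(Δn, n-1)`. -/
theorem lagrange_coeff {K : Type*} [Field K] [CharZero K]
    (p : K) (Δ : ℕ) (hΔ : 2 ≤ Δ) (W : PowerSeries K)
    (h0 : PowerSeries.constantCoeff W = 0)
    (hW : W = PowerSeries.C p * PowerSeries.X * (W + 1) ^ Δ) :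
    ∀ n : ℕ, 1 ≤ n →
      PowerSeries.coeff n W = (1 / (n : K)) * p ^ n * ((Δ * n).choose (n - 1)) := by
  intro n hn
  have h1 : PowerSeries.coeff n W = PowerSeries.coeff n ((W+1)^1) := by
    rw [pow_one, map_add, PowerSeries.coeff_one, if_neg (by omega : n ≠ 0), add_zero]
  rw [h1, lagrange_key p Δ hΔ W h0 hW n hn 1]
  have hid := Nat.add_one_mul_choose_eq (Δ*n) (n-1)
  rw [(by omega : n - 1 + 1 = n)] at hid
  have hidK := congrArg (Nat.cast : ℕ → K) hid
  push_cast at hidK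
  have hn0 : (n : K) ≠ 0 := Nat.cast_ne_zero.2 (by omega)
  have hA : ((Δ:K)*n + 1) ≠ 0 := by
    have : ((Δ*n+1 : ℕ) : K) ≠ 0 := Nat.cast_ne_zero.2 (by omega)
    push_cast at this; exact this
  push_cast
  field_simp
  linear_combination (-(p^n)) * hidK
end

section
/- Every finite simple graph G with maximum degree Δ admits a proper edge coloring using at most 2(Δ-1) + 1 = 2Δ - 1 colors in which no cycle of length at most 4 is bichromatic, i.e., every cycle of G of length at most 4 receives at least three distinct colors on its edges. -/
/-- `col` is a proper edge coloring of `G`: distinct edges sharing an endpoint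
receive distinct colors. -/
def IsProperEdgeColoring {V : Type*} (G : SimpleGraph V) (col : Sym2 V → ℕ) : Prop :=
  ∀ e₁ ∈ G.edgeSet, ∀ e₂ ∈ G.edgeSet, e₁ ≠ e₂ → (∃ v, v ∈ e₁ ∧ v ∈ e₂) →
    col e₁ ≠ col e₂

section Aux

open Finset

variable {V : Type*} [Fintype V] [DecidableEq V]

/-- A "good" partial coloring on a set `S` of edges: bounded, proper on `S`,
and with no bichromatic 4-cycle whose edges all lie in `S`. -/
def GoodCol (G : SimpleGraph V) (Δ : ℕ) (S : Finset (Sym2 V)) (col : Sym2 V → ℕ) : Prop :=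
  (∀ e ∈ S, col e < 2 * Δ - 1) ∧
  (∀ e₁ ∈ S, ∀ e₂ ∈ S, e₁ ≠ e₂ → (∃ v, v ∈ e₁ ∧ v ∈ e₂) → col e₁ ≠ col e₂) ∧
  (∀ a b c d : V, G.Adj a b → G.Adj b c → G.Adj c d → G.Adj d a →
    s(a,b) ∈ S → s(b,c) ∈ S → s(c,d) ∈ S → s(d,a) ∈ S → a ≠ c → b ≠ d →
    ¬(col s(a,b) = col s(c,d) ∧ col s(b,c) = col s(d,a)))

lemma good_step (G : SimpleGraph V) [DecidableRel G.Adj] (Δ : ℕ)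
    (hdeg : ∀ v, G.degree v ≤ Δ) (S : Finset (Sym2 V)) (hS : S ⊆ G.edgeFinset)
    (u v : V) (huv : G.Adj u v) (he : s(u,v) ∉ S)
    (col : Sym2 V → ℕ) (h : GoodCol G Δ S col) :
    ∃ col' : Sym2 V → ℕ, GoodCol G Δ (insert s(u,v) S) col' := by
  obtain ⟨hb, hp, hc⟩ := h
  have hAdjOfS : ∀ {x y : V}, s(x,y) ∈ S → G.Adj x y := by
    intro x y hxy
    have := hS hxy
    rwa [SimpleGraph.mem_edgeFinset, SimpleGraph.mem_edgeSet] at this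
  set Nu : Finset (Sym2 V) := S.filter (fun f => u ∈ f) with hNu_def
  set Nv : Finset (Sym2 V) := S.filter (fun f => v ∈ f) with hNv_def
  set T : Finset (V × V) := Finset.univ.filter
      (fun p : V × V => s(v, p.1) ∈ S ∧ s(u, p.2) ∈ S ∧ s(p.1, p.2) ∈ S ∧
        col s(v, p.1) = col s(u, p.2)) with hT_def
  set F : Finset ℕ := (Nu.image col ∪ Nv.image col) ∪ T.image (fun p => col s(p.1, p.2))
    with hF_def
  -- cardinality bounds
  have hΔ1 : 1 ≤ Δ := by
    have h1 : 0 < G.degree u := by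
      rw [SimpleGraph.degree_pos_iff_exists_adj]; exact ⟨v, huv⟩
    exact le_trans h1 (hdeg u)
  have hNu_card : Nu.card ≤ Δ - 1 := by
    have hsub : Nu ⊆ (G.incidenceFinset u).erase s(u,v) := by
      intro f hf
      rw [hNu_def, mem_filter] at hf
      rw [mem_erase, SimpleGraph.mem_incidenceFinset]
      exact ⟨fun hfe => he (hfe ▸ hf.1), ⟨(SimpleGraph.mem_edgeFinset).1 (hS hf.1), hf.2⟩⟩
    have h1 := card_le_card hsub
    have h2 : ((G.incidenceFinset u).erase s(u,v)).card = (G.incidenceFinset u).card - 1 := by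
      apply card_erase_of_mem
      rw [SimpleGraph.mem_incidenceFinset]
      exact ⟨(SimpleGraph.mem_edgeSet G).mpr huv, by simp⟩
    rw [h2, SimpleGraph.card_incidenceFinset_eq_degree] at h1
    have := hdeg u
    omega
  have hNv_card : Nv.card ≤ Δ - 1 := by
    have hsub : Nv ⊆ (G.incidenceFinset v).erase s(u,v) := by
      intro f hf
      rw [hNv_def, mem_filter] at hf
      rw [mem_erase, SimpleGraph.mem_incidenceFinset]
      exact ⟨fun hfe => he (hfe ▸ hf.1), ⟨(SimpleGraph.mem_edgeFinset).1 (hS hf.1), hf.2⟩⟩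
    have h1 := card_le_card hsub
    have h2 : ((G.incidenceFinset v).erase s(u,v)).card = (G.incidenceFinset v).card - 1 := by
      apply card_erase_of_mem
      rw [SimpleGraph.mem_incidenceFinset]
      exact ⟨(SimpleGraph.mem_edgeSet G).mpr huv, by simp⟩
    rw [h2, SimpleGraph.card_incidenceFinset_eq_degree] at h1
    have := hdeg v
    omega
  have hNuimg : (Nu.image col).card ≤ Nu.card := card_image_le
  have hNvimg : (Nv.image col).card ≤ Nv.card := card_image_le
  -- injectivity helper: edges in S containing a common vertex have distinct colors
  have hinj_at : ∀ (w x y : V), s(w,x) ∈ S → s(w,y) ∈ S → col s(w,x) = col s(w,y) → x = y := by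
    intro w x y hx hy hcol
    by_contra hxy
    have hne : s(w,x) ≠ s(w,y) := by
      intro heq
      rcases Sym2.eq_iff.mp heq with ⟨-, h⟩ | ⟨h, -⟩
      · exact hxy h
      · exact (hAdjOfS hy).ne h
    exact hp _ hx _ hy hne ⟨w, by simp, by simp⟩ hcol
  have hT_card : T.card ≤ ((Nu.image col) ∩ (Nv.image col)).card := by
    apply Finset.card_le_card_of_injOn (fun p => col s(v, p.1))
    · intro p hp'
      rw [hT_def, Finset.mem_coe, mem_filter] at hp'
      obtain ⟨-, h1, h2, h3, h4⟩ := hp'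
      rw [Finset.mem_coe, mem_inter]
      constructor
      · beta_reduce; rw [h4]
        exact mem_image_of_mem col (by rw [hNu_def, mem_filter]; exact ⟨h2, by simp⟩)
      · exact mem_image_of_mem col (by rw [hNv_def, mem_filter]; exact ⟨h1, by simp⟩)
    · intro p hp1 q hq1 hpq
      simp only [coe_filter, Set.mem_setOf_eq, hT_def, Finset.mem_coe, mem_filter] at hp1 hq1
      obtain ⟨-, p1, p2, p3, p4⟩ := hp1
      obtain ⟨-, q1, q2, q3, q4⟩ := hq1
      have e1 : p.1 = q.1 := hinj_at v _ _ p1 q1 hpq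
      have e2 : p.2 = q.2 := by
        apply hinj_at u _ _ p2 q2
        rw [← p4, ← q4, ← e1]
      exact Prod.ext e1 e2
  have hF_card : F.card ≤ 2 * Δ - 2 := by
    have h1 : F.card ≤ (Nu.image col ∪ Nv.image col).card
        + (T.image (fun p : V × V => col s(p.1, p.2))).card := card_union_le _ _
    have h2 : (T.image (fun p : V × V => col s(p.1, p.2))).card ≤ T.card := card_image_le
    have h3 := Finset.card_union_add_card_inter (Nu.image col) (Nv.image col)
    omega
  -- pick a fresh color
  have hex : (Finset.range (2 * Δ - 1) \ F).Nonempty := by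
    rw [← card_pos]
    have := Finset.le_card_sdiff F (Finset.range (2 * Δ - 1))
    rw [card_range] at this
    omega
  obtain ⟨cn, hcn⟩ := hex
  rw [mem_sdiff, mem_range] at hcn
  obtain ⟨hcn_lt, hcn_notF⟩ := hcn
  -- the new coloring
  refine ⟨fun f => if f = s(u,v) then cn else col f, ?_, ?_, ?_⟩
  · intro f hf
    rcases mem_insert.mp hf with rfl | hf
    · simp [hcn_lt]
    · have hfne : f ≠ s(u,v) := fun hfe => he (hfe ▸ hf)
      simpa [hfne] using hb f hf
  · -- properness
    have key : ∀ f ∈ S, (∃ w', w' ∈ f ∧ w' ∈ s(u,v)) → col f ∈ F := by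
      intro f hf ⟨w', hw1, hw2⟩
      rw [Sym2.mem_iff] at hw2
      rw [hF_def, mem_union, mem_union]
      rcases hw2 with rfl | rfl
      · exact Or.inl (Or.inl (mem_image_of_mem col (by rw [hNu_def, mem_filter]; exact ⟨hf, hw1⟩)))
      · exact Or.inl (Or.inr (mem_image_of_mem col (by rw [hNv_def, mem_filter]; exact ⟨hf, hw1⟩)))
    intro f1 h1 f2 h2 hne hsh
    rcases mem_insert.mp h1 with rfl | h1 <;> rcases mem_insert.mp h2 with rfl | h2
    · exact absurd rfl hne
    · have hf2 : f2 ≠ s(u,v) := fun hfe => he (hfe ▸ h2)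
      intro hcc
      have hcc' : cn = col f2 := by simpa [hf2] using hcc
      apply hcn_notF
      rw [hcc']
      exact key f2 h2 (by obtain ⟨w', hw1, hw2⟩ := hsh; exact ⟨w', hw2, hw1⟩)
    · have hf1 : f1 ≠ s(u,v) := fun hfe => he (hfe ▸ h1)
      intro hcc
      have hcc' : col f1 = cn := by simpa [hf1] using hcc
      apply hcn_notF
      rw [← hcc']
      exact key f1 h1 hsh
    · have hf1 : f1 ≠ s(u,v) := fun hfe => he (hfe ▸ h1)
      have hf2 : f2 ≠ s(u,v) := fun hfe => he (hfe ▸ h2)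
      have := hp f1 h1 f2 h2 hne hsh
      simpa [hf1, hf2] using this
  · -- no bichromatic 4-cycle
    set col' : Sym2 V → ℕ := fun f => if f = s(u,v) then cn else col f with hcol'_def
    have hcol'S : ∀ f ∈ S, col' f = col f := by
      intro f hf
      have : f ≠ s(u,v) := fun hfe => he (hfe ▸ hf)
      simp [hcol'_def, this]
    -- key case: the first edge of the 4-cycle is the new edge
    have key : ∀ a b c d : V, G.Adj a b → G.Adj b c → G.Adj c d → G.Adj d a →
        s(a,b) = s(u,v) → s(b,c) ∈ S → s(c,d) ∈ S → s(d,a) ∈ S →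
        col' s(a,b) = col' s(c,d) → col' s(b,c) = col' s(d,a) → False := by
      intro a b c d hab hbc hcd hda habe hbcS hcdS hdaS h1 h2
      rw [hcol'S _ hbcS, hcol'S _ hdaS] at h2
      rw [hcol'S _ hcdS] at h1
      have hab_cn : col' s(a,b) = cn := by rw [hcol'_def]; simp [habe]
      rw [hab_cn] at h1
      rw [Sym2.eq_iff] at habe
      have hmemT : col s(c,d) ∈ F := by
        rw [hF_def, mem_union]
        right
        rcases habe with ⟨rfl, rfl⟩ | ⟨rfl, rfl⟩
        · -- a = u, b = v
          apply mem_image_of_mem _ (show ((c,d) : V × V) ∈ T from ?_)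
          rw [hT_def, mem_filter]
          refine ⟨mem_univ _, hbcS, ?_, hcdS, ?_⟩
          · rwa [Sym2.eq_swap] at hdaS
          · rw [h2, Sym2.eq_swap]
        · -- a = v, b = u
          have : col s(d,c) ∈ (T.image fun p : V × V => col s(p.1, p.2)) := by
            apply mem_image_of_mem _ (show ((d,c) : V × V) ∈ T from ?_)
            rw [hT_def, mem_filter]
            refine ⟨mem_univ _, ?_, hbcS, ?_, ?_⟩
            · rwa [Sym2.eq_swap] at hdaS
            · rwa [Sym2.eq_swap]
            · rw [Sym2.eq_swap, h2]
          rwa [Sym2.eq_swap] at this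
      exact hcn_notF (h1 ▸ hmemT)
    intro a b c d hab hbc hcd hda hmab hmbc hmcd hmda hac hbd ⟨h1, h2⟩
    -- pairwise distinct edges
    by_cases e1 : s(a,b) = s(u,v)
    · have m2 : s(b,c) ∈ S := by
        rcases mem_insert.mp hmbc with hh | hh
        · exfalso; rw [← e1, Sym2.eq_iff] at hh
          rcases hh with ⟨hx, -⟩ | ⟨-, hx⟩
          · exact hab.ne hx.symm
          · exact hac hx.symm
        · exact hh
      have m3 : s(c,d) ∈ S := by
        rcases mem_insert.mp hmcd with hh | hh
        · exfalso; rw [← e1, Sym2.eq_iff] at hh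
          rcases hh with ⟨hx, -⟩ | ⟨-, hx⟩
          · exact hac hx.symm
          · exact hda.ne hx
        · exact hh
      have m4 : s(d,a) ∈ S := by
        rcases mem_insert.mp hmda with hh | hh
        · exfalso; rw [← e1, Sym2.eq_iff] at hh
          rcases hh with ⟨hx, -⟩ | ⟨hx, -⟩
          · exact hda.ne hx
          · exact hbd hx.symm
        · exact hh
      exact key a b c d hab hbc hcd hda e1 m2 m3 m4 h1 h2
    · by_cases e2 : s(b,c) = s(u,v)
      · have m2 : s(c,d) ∈ S := by
          rcases mem_insert.mp hmcd with hh | hh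
          · exfalso; rw [← e2, Sym2.eq_iff] at hh
            rcases hh with ⟨hx, -⟩ | ⟨-, hx⟩
            · exact hbc.ne hx.symm
            · exact hbd hx.symm
          · exact hh
        have m3 : s(d,a) ∈ S := by
          rcases mem_insert.mp hmda with hh | hh
          · exfalso; rw [← e2, Sym2.eq_iff] at hh
            rcases hh with ⟨hx, -⟩ | ⟨hx, -⟩
            · exact hbd hx.symm
            · exact hcd.ne hx.symm
          · exact hh
        have m4 : s(a,b) ∈ S := by
          rcases mem_insert.mp hmab with hh | hh
          · exact absurd hh e1
          · exact hh
        exact key b c d a hbc hcd hda hab e2 m2 m3 m4 h2 (by rw [h1])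
      · by_cases e3 : s(c,d) = s(u,v)
        · have m2 : s(d,a) ∈ S := by
            rcases mem_insert.mp hmda with hh | hh
            · exfalso; rw [← e3, Sym2.eq_iff] at hh
              rcases hh with ⟨hx, -⟩ | ⟨-, hx⟩
              · exact hcd.ne hx.symm
              · exact hac hx
            · exact hh
          have m3 : s(a,b) ∈ S := by
            rcases mem_insert.mp hmab with hh | hh
            · exact absurd hh e1
            · exact hh
          have m4 : s(b,c) ∈ S := by
            rcases mem_insert.mp hmbc with hh | hh
            · exact absurd hh e2
            · exact hh
          exact key c d a b hcd hda hab hbc e3 m2 m3 m4 h1.symm h2.symm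
        · by_cases e4 : s(d,a) = s(u,v)
          · have m2 : s(a,b) ∈ S := by
              rcases mem_insert.mp hmab with hh | hh
              · exact absurd hh e1
              · exact hh
            have m3 : s(b,c) ∈ S := by
              rcases mem_insert.mp hmbc with hh | hh
              · exact absurd hh e2
              · exact hh
            have m4 : s(c,d) ∈ S := by
              rcases mem_insert.mp hmcd with hh | hh
              · exact absurd hh e3
              · exact hh
            exact key d a b c hda hab hbc hcd e4 m2 m3 m4 h2.symm (by rw [h1])
          · have m1 : s(a,b) ∈ S := by
              rcases mem_insert.mp hmab with hh | hh
              · exact absurd hh e1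
              · exact hh
            have m2 : s(b,c) ∈ S := by
              rcases mem_insert.mp hmbc with hh | hh
              · exact absurd hh e2
              · exact hh
            have m3 : s(c,d) ∈ S := by
              rcases mem_insert.mp hmcd with hh | hh
              · exact absurd hh e3
              · exact hh
            have m4 : s(d,a) ∈ S := by
              rcases mem_insert.mp hmda with hh | hh
              · exact absurd hh e4
              · exact hh
            simp only [hcol'S _ m1, hcol'S _ m2, hcol'S _ m3, hcol'S _ m4] at h1 h2
            exact hc a b c d hab hbc hcd hda m1 m2 m3 m4 hac hbd ⟨h1, h2⟩

lemma good_exists (G : SimpleGraph V) [DecidableRel G.Adj] (Δ : ℕ)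
    (hdeg : ∀ v, G.degree v ≤ Δ) (S : Finset (Sym2 V)) :
    S ⊆ G.edgeFinset → ∃ col : Sym2 V → ℕ, GoodCol G Δ S col := by
  induction S using Finset.induction_on with
  | empty =>
    intro _
    exact ⟨fun _ => 0, by simp [GoodCol]⟩
  | @insert e S he ih =>
    induction e using Sym2.ind with
    | _ u v =>
      intro hIns
      have hSsub : S ⊆ G.edgeFinset := (Finset.subset_insert _ _).trans hIns
      obtain ⟨col, hcol⟩ := ih hSsub
      have huv : G.Adj u v := by
        have := hIns (Finset.mem_insert_self _ _)
        rwa [SimpleGraph.mem_edgeFinset, SimpleGraph.mem_edgeSet] at this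
      exact good_step G Δ hdeg S hSsub u v huv he col hcol

lemma card3 {c1 c2 c3 : ℕ} (h12 : c1 ≠ c2) (h13 : c1 ≠ c3) (h23 : c2 ≠ c3) :
    ({c1, c2, c3} : Finset ℕ).card = 3 := by
  rw [Finset.card_insert_of_notMem (by simp [h12, h13]),
    Finset.card_insert_of_notMem (by simp [h23]), Finset.card_singleton]

lemma card4 {c1 c2 c3 c4 : ℕ} (h12 : c1 ≠ c2) (h23 : c2 ≠ c3) (h34 : c3 ≠ c4)
    (h41 : c4 ≠ c1) (h : ¬(c1 = c3 ∧ c2 = c4)) :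
    3 ≤ ({c1, c2, c3, c4} : Finset ℕ).card := by
  by_cases h13 : c1 = c3
  · have h24 : c2 ≠ c4 := fun h' => h ⟨h13, h'⟩
    calc 3 = ({c1, c2, c4} : Finset ℕ).card := (card3 h12 (Ne.symm h41) h24).symm
    _ ≤ ({c1, c2, c3, c4} : Finset ℕ).card := by
        apply Finset.card_le_card
        intro x hx
        simp only [Finset.mem_insert, Finset.mem_singleton] at hx ⊢
        tauto
  · calc 3 = ({c1, c2, c3} : Finset ℕ).card := (card3 h12 h13 h23).symm
    _ ≤ ({c1, c2, c3, c4} : Finset ℕ).card := by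
        apply Finset.card_le_card
        intro x hx
        simp only [Finset.mem_insert, Finset.mem_singleton] at hx ⊢
        tauto

end Aux

/-- Every finite simple graph of maximum degree at most `Δ` admits a proper
edge coloring with at most `2(Δ-1)+1 = 2Δ-1` colors in which every cycle of
length at most `4` receives at least three distinct colors on its edges. -/
theorem four_acyclic_coloring {V : Type*} [Fintype V] [DecidableEq V]
    (G : SimpleGraph V) [DecidableRel G.Adj] (Δ : ℕ)
    (hdeg : ∀ v, G.degree v ≤ Δ) :
    ∃ col : Sym2 V → ℕ,
      (∀ e ∈ G.edgeSet, col e < 2 * Δ - 1) ∧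
      IsProperEdgeColoring G col ∧
      ∀ (v : V) (w : G.Walk v v), w.IsCycle → w.length ≤ 4 →
        3 ≤ (w.edges.map col).toFinset.card := by
  obtain ⟨col, hb, hp, hc⟩ := good_exists G Δ hdeg G.edgeFinset (le_refl _)
  have hmem : ∀ {x y : V}, G.Adj x y → s(x,y) ∈ G.edgeFinset := by
    intro x y hxy
    rw [SimpleGraph.mem_edgeFinset, SimpleGraph.mem_edgeSet]
    exact hxy
  refine ⟨col, ?_, ?_, ?_⟩
  · intro e he
    exact hb e (SimpleGraph.mem_edgeFinset.2 he)
  · intro e1 h1 e2 h2 hne hsh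
    exact hp e1 (SimpleGraph.mem_edgeFinset.2 h1) e2 (SimpleGraph.mem_edgeFinset.2 h2) hne hsh
  · intro v w hcyc hlen
    have h3 := hcyc.three_le_length
    match w, hcyc, hlen, h3 with
    | .nil, _, _, h3 => simp at h3
    | .cons h1 .nil, _, _, h3 => simp at h3
    | .cons h1 (.cons h2 .nil), _, _, h3 => simp at h3
    | .cons (u := c) (v := a) h1 (.cons (v := b) h2 (.cons h3' .nil)), hcyc, _, _ =>
      -- triangle c a b c  (start renamed to c)
      simp only [SimpleGraph.Walk.edges_cons, SimpleGraph.Walk.edges_nil, List.map_cons,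
        List.map_nil, List.toFinset_cons, List.toFinset_nil, LawfulSingleton.insert_empty_eq]
      have d12 : s(c,a) ≠ s(a,b) := by
        intro heq
        rcases Sym2.eq_iff.mp heq with ⟨h, -⟩ | ⟨h, -⟩
        · exact h1.ne h
        · exact h3'.ne h.symm
      have d13 : s(c,a) ≠ s(b,c) := by
        intro heq
        rcases Sym2.eq_iff.mp heq with ⟨-, h⟩ | ⟨-, h⟩
        · exact h1.ne h.symm
        · exact h2.ne h
      have d23 : s(a,b) ≠ s(b,c) := by
        intro heq
        rcases Sym2.eq_iff.mp heq with ⟨h, -⟩ | ⟨h, -⟩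
        · exact h2.ne h
        · exact h1.ne h.symm
      have c12 : col s(c,a) ≠ col s(a,b) :=
        hp _ (hmem h1) _ (hmem h2) d12 ⟨a, by simp, by simp⟩
      have c13 : col s(c,a) ≠ col s(b,c) :=
        hp _ (hmem h1) _ (hmem h3') d13 ⟨c, by simp, by simp⟩
      have c23 : col s(a,b) ≠ col s(b,c) :=
        hp _ (hmem h2) _ (hmem h3') d23 ⟨b, by simp, by simp⟩
      rw [card3 c12 c13 c23]
    | .cons (u := d) (v := a) h1 (.cons (v := b) h2 (.cons (v := c) h3' (.cons h4 .nil))), hcyc, _, _ =>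
      -- 4-cycle d a b c d  (start renamed to d)
      simp only [SimpleGraph.Walk.edges_cons, SimpleGraph.Walk.edges_nil, List.map_cons,
        List.map_nil, List.toFinset_cons, List.toFinset_nil, LawfulSingleton.insert_empty_eq]
      have hnodup := hcyc.2
      simp only [SimpleGraph.Walk.support_cons, SimpleGraph.Walk.support_nil,
        List.tail_cons, List.nodup_cons, List.mem_cons, List.mem_singleton,
        List.not_mem_nil, List.nodup_nil] at hnodup
      have hac : a ≠ c := by tauto
      have hbd : b ≠ d := by tauto
      have hnb := hc d a b c h1 h2 h3' h4 (hmem h1) (hmem h2) (hmem h3') (hmem h4)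
        (Ne.symm hbd) hac
      have c12 : col s(d,a) ≠ col s(a,b) :=
        hp _ (hmem h1) _ (hmem h2)
          (by intro heq
              rcases Sym2.eq_iff.mp heq with ⟨h, -⟩ | ⟨h, -⟩
              · exact h1.ne h
              · exact hbd h.symm)
          ⟨a, by simp, by simp⟩
      have c23 : col s(a,b) ≠ col s(b,c) :=
        hp _ (hmem h2) _ (hmem h3')
          (by intro heq
              rcases Sym2.eq_iff.mp heq with ⟨h, -⟩ | ⟨h, -⟩
              · exact h2.ne h
              · exact hac h)
          ⟨b, by simp, by simp⟩
      have c34 : col s(b,c) ≠ col s(c,d) :=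
        hp _ (hmem h3') _ (hmem h4)
          (by intro heq
              rcases Sym2.eq_iff.mp heq with ⟨h, -⟩ | ⟨h, -⟩
              · exact h3'.ne h
              · exact hbd h)
          ⟨c, by simp, by simp⟩
      have c41 : col s(c,d) ≠ col s(d,a) :=
        hp _ (hmem h4) _ (hmem h1)
          (by intro heq
              rcases Sym2.eq_iff.mp heq with ⟨h, -⟩ | ⟨h, -⟩
              · exact h4.ne h
              · exact hac h.symm)
          ⟨d, by simp, by simp⟩
      exact card4 c12 c23 c34 c41 hnb
    | .cons h1 (.cons h2 (.cons h3' (.cons h4 (.cons h5 r)))), _, hlen, _ =>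
      simp only [SimpleGraph.Walk.length_cons] at hlen
      omega
end

section
/- Let γ = 1.73095, let b = 1 - e^{-1/γ}, define φ(x) = (1/γ) · b^3 · (x+1)^6 / (1 - b^2 · (x+1)^2), and let R = 1/b - 1. Then there exists a real τ with 0 < τ < R such that φ(τ) - τ·φ'(τ) = 0 and φ(τ)/τ < 1. -/
lemma exp_inv_gamma_bounds :
    (1.781966337177 : ℝ) < Real.exp (1 / 1.73095) ∧
      Real.exp (1 / 1.73095) < 1.781966337184 := by
  have h0 : |(1 / 1.73095 : ℝ)| ≤ 1 := by
    rw [abs_of_pos (by norm_num)]; norm_num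
  have h := Real.exp_bound h0 (n := 13) (by norm_num)
  rw [abs_of_pos (by norm_num : (0:ℝ) < 1 / 1.73095), abs_le] at h
  norm_num [Finset.sum_range_succ, Nat.factorial] at h
  constructor <;> nlinarith [h.1, h.2]

lemma b_bounds :
    (0.4388221712 : ℝ) < 1 - Real.exp (-1 / 1.73095) ∧
      1 - Real.exp (-1 / 1.73095) < 0.4388221713 := by
  obtain ⟨h1, h2⟩ := exp_inv_gamma_bounds
  have hprod : Real.exp (-1 / 1.73095) * Real.exp (1 / 1.73095) = 1 := by
    rw [← Real.exp_add]; norm_num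
  have he : (0:ℝ) < Real.exp (-1 / 1.73095) := Real.exp_pos _
  constructor <;> nlinarith [hprod, h1, h2, he]

set_option maxHeartbeats 2000000 in
/-- For `γ = 1.73095`, `b = 1 - e^(-1/γ)`,
`φ(x) = (1/γ)·b³·(x+1)⁶ / (1 - b²·(x+1)²)` and `R = 1/b - 1`, there is a real
`τ` with `0 < τ < R` satisfying the characteristic equation
`φ(τ) - τ·φ'(τ) = 0` and such that `φ(τ)/τ < 1`. -/
theorem characteristic_root_girth5 :
    ∃ τ : ℝ, 0 < τ ∧
      τ < 1 / (1 - Real.exp (-1 / 1.73095)) - 1 ∧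
      (fun x : ℝ => (1 / 1.73095) * (1 - Real.exp (-1 / 1.73095)) ^ 3 * (x + 1) ^ 6 /
          (1 - (1 - Real.exp (-1 / 1.73095)) ^ 2 * (x + 1) ^ 2)) τ -
        τ * deriv (fun x : ℝ =>
          (1 / 1.73095) * (1 - Real.exp (-1 / 1.73095)) ^ 3 * (x + 1) ^ 6 /
            (1 - (1 - Real.exp (-1 / 1.73095)) ^ 2 * (x + 1) ^ 2)) τ = 0 ∧
      (fun x : ℝ => (1 / 1.73095) * (1 - Real.exp (-1 / 1.73095)) ^ 3 * (x + 1) ^ 6 /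
          (1 - (1 - Real.exp (-1 / 1.73095)) ^ 2 * (x + 1) ^ 2)) τ / τ < 1 := by
  obtain ⟨hb1, hb2⟩ := b_bounds
  set b : ℝ := 1 - Real.exp (-1 / 1.73095) with hbdef
  clear_value b
  have hb0 : (0:ℝ) < b := lt_trans (by norm_num) hb1
  have hbsq : b ^ 2 < 0.4388221713 ^ 2 := by nlinarith
  have hbsq' : 0.4388221712 ^ 2 < b ^ 2 := by nlinarith
  -- the characteristic polynomial
  have hPc : ContinuousOn
      (fun x : ℝ => 3 * b ^ 2 * (x + 1) ^ 3 - 4 * b ^ 2 * (x + 1) ^ 2 - 5 * (x + 1) + 6)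
      (Set.Icc (0.1747094 : ℝ) 0.1747096) := by fun_prop
  have hP1 : (0:ℝ) <
      3 * b ^ 2 * ((0.1747094:ℝ) + 1) ^ 3 - 4 * b ^ 2 * ((0.1747094:ℝ) + 1) ^ 2
        - 5 * ((0.1747094:ℝ) + 1) + 6 := by nlinarith
  have hP2 : (3 * b ^ 2 * ((0.1747096:ℝ) + 1) ^ 3 - 4 * b ^ 2 * ((0.1747096:ℝ) + 1) ^ 2
        - 5 * ((0.1747096:ℝ) + 1) + 6) < 0 := by nlinarith
  obtain ⟨τ, hτmem, hτP⟩ := intermediate_value_Icc' (by norm_num : (0.1747094:ℝ) ≤ 0.1747096)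
    hPc ⟨le_of_lt hP2, le_of_lt hP1⟩
  obtain ⟨hτ1, hτ2⟩ := hτmem
  have hτP : 3 * b ^ 2 * (τ + 1) ^ 3 - 4 * b ^ 2 * (τ + 1) ^ 2 - 5 * (τ + 1) + 6 = 0 := hτP
  have hτ0 : (0:ℝ) < τ := by linarith
  -- denominator is positive
  have hbu : b * (τ + 1) < 0.4388221713 * 1.1747096 := by nlinarith
  have hbu0 : 0 < b * (τ + 1) := by nlinarith
  have hD : 0 < 1 - b ^ 2 * (τ + 1) ^ 2 := by nlinarith
  -- derivative
  have hnum : HasDerivAt (fun x : ℝ => 1 / 1.73095 * b ^ 3 * (x + 1) ^ 6)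
      (1 / 1.73095 * b ^ 3 * (6 * (τ + 1) ^ 5)) τ := by
    have h := (((hasDerivAt_id τ).add_const 1).pow 6).const_mul (1 / 1.73095 * b ^ 3)
    simpa [mul_comm, mul_assoc, mul_left_comm] using h
  have hden : HasDerivAt (fun x : ℝ => 1 - b ^ 2 * (x + 1) ^ 2)
      (-(b ^ 2 * (2 * (τ + 1)))) τ := by
    have h := (((hasDerivAt_id τ).add_const 1).pow 2).const_mul (b ^ 2)
    have h2 := (hasDerivAt_const τ (1:ℝ)).sub h
    simpa [mul_comm, mul_assoc, mul_left_comm, Pi.sub_def] using h2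
  have hF : HasDerivAt
      (fun x : ℝ => 1 / 1.73095 * b ^ 3 * (x + 1) ^ 6 / (1 - b ^ 2 * (x + 1) ^ 2))
      ((1 / 1.73095 * b ^ 3 * (6 * (τ + 1) ^ 5) * (1 - b ^ 2 * (τ + 1) ^ 2) -
          1 / 1.73095 * b ^ 3 * (τ + 1) ^ 6 * -(b ^ 2 * (2 * (τ + 1)))) /
        (1 - b ^ 2 * (τ + 1) ^ 2) ^ 2) τ := hnum.div hden (ne_of_gt hD)
  refine ⟨τ, hτ0, ?_, ?_, ?_⟩
  · -- τ < 1/b - 1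
    have h : (2.27:ℝ) < 1 / b := by
      rw [lt_div_iff₀ hb0]; nlinarith
    linarith
  · -- characteristic equation
    simp only
    rw [hF.deriv]
    have hD' : (1 - b ^ 2 * (τ + 1) ^ 2) ≠ 0 := ne_of_gt hD
    have heq : 1 / 1.73095 * b ^ 3 * (τ + 1) ^ 6 / (1 - b ^ 2 * (τ + 1) ^ 2) -
        τ * ((1 / 1.73095 * b ^ 3 * (6 * (τ + 1) ^ 5) * (1 - b ^ 2 * (τ + 1) ^ 2) -
            1 / 1.73095 * b ^ 3 * (τ + 1) ^ 6 * -(b ^ 2 * (2 * (τ + 1)))) /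
          (1 - b ^ 2 * (τ + 1) ^ 2) ^ 2) =
        1 / 1.73095 * b ^ 3 * (τ + 1) ^ 5 *
            (3 * b ^ 2 * (τ + 1) ^ 3 - 4 * b ^ 2 * (τ + 1) ^ 2 - 5 * (τ + 1) + 6) /
          (1 - b ^ 2 * (τ + 1) ^ 2) ^ 2 := by
      field_simp
      ring
    rw [heq, hτP, mul_zero, zero_div]
  · -- φ(τ)/τ < 1
    simp only
    rw [div_lt_one hτ0, div_lt_iff₀ hD]
    have h13 : (0:ℝ) < 1 - 3 * τ := by linarith
    have hb3 : b ^ 3 < 0.08450175 := by nlinarith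
    have hu6 : (τ + 1) ^ 6 < 2.62774433 := by
      have h1 : (τ + 1 : ℝ) ≤ 1.1747096 := by linarith
      have h2 : (τ + 1 : ℝ) ^ 6 ≤ 1.1747096 ^ 6 :=
        pow_le_pow_left₀ (by linarith) h1 6
      nlinarith [h2]
    have ha0 : (0:ℝ) < b ^ 3 * (τ + 1) ^ 6 := by positivity
    have h1 : b ^ 3 * (τ + 1) ^ 6 < 0.08450175 * 2.62774433 :=
      mul_lt_mul'' hb3 hu6 (by positivity) (by positivity)
    have h13b : 1 - 3 * τ ≤ 0.4758718 := by linarith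
    have h2 : b ^ 3 * (τ + 1) ^ 6 * (1 - 3 * τ) ≤ b ^ 3 * (τ + 1) ^ 6 * 0.4758718 :=
      mul_le_mul_of_nonneg_left h13b (le_of_lt ha0)
    have h3 : b ^ 3 * (τ + 1) ^ 6 * 0.4758718 < 0.08450175 * 2.62774433 * 0.4758718 := by
      nlinarith [h1]
    have hτsq : (0.1747094:ℝ) ^ 2 ≤ τ ^ 2 := by nlinarith
    have hkey : b ^ 3 * (τ + 1) ^ 6 * (1 - 3 * τ) < 2 * 1.73095 * τ ^ 2 := by
      nlinarith [h2, h3, hτsq]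
    refine lt_of_mul_lt_mul_right ?_ (le_of_lt h13)
    have hrw : τ * (1 - b ^ 2 * (τ + 1) ^ 2) * (1 - 3 * τ) = 2 * τ ^ 2 := by
      linear_combination τ * hτP
    rw [hrw]
    nlinarith [hkey]
end

section
/- Let γ = 1.326, let b = 1 - e^{-1/γ}, define φ(x) = (1/γ) · b^5 · (x+1)^8 / (1 - b^2 · (x+1)^2), and let R = 1/b - 1. Then there exists a real τ with 0 < τ < R such that φ(τ) - τ·φ'(τ) = 0 and φ(τ)/τ < 1. -/
/-- The kernel function `φ` for girth parameter `r = 4`. -/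
noncomputable def phiAux (b : ℝ) : ℝ → ℝ :=
  fun x : ℝ => (1 / 1.326) * b ^ 5 * (x + 1) ^ 8 / (1 - b ^ 2 * (x + 1) ^ 2)

/-- The derivative of `phiAux b`. -/
noncomputable def phiAux' (b : ℝ) : ℝ → ℝ :=
  fun x : ℝ => (1 / 1.326) * b ^ 5 * (x + 1) ^ 7 * (8 - 6 * b ^ 2 * (x + 1) ^ 2) /
    (1 - b ^ 2 * (x + 1) ^ 2) ^ 2

lemma phiAux_hasDerivAt (b x : ℝ) (h : 1 - b ^ 2 * (x + 1) ^ 2 ≠ 0) :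
    HasDerivAt (phiAux b) (phiAux' b x) x := by
  have h1 : HasDerivAt (fun x : ℝ => x + 1) 1 x := (hasDerivAt_id x).add_const 1
  have hn : HasDerivAt (fun x : ℝ => (1 / 1.326) * b ^ 5 * (x + 1) ^ 8)
      ((1 / 1.326) * b ^ 5 * (8 * (x + 1) ^ 7)) x := by
    simpa using (h1.pow 8).const_mul ((1 / 1.326) * b ^ 5)
  have hd : HasDerivAt (fun x : ℝ => 1 - b ^ 2 * (x + 1) ^ 2)
      (-(b ^ 2 * (2 * (x + 1)))) x := by
    simpa using ((h1.pow 2).const_mul (b ^ 2)).const_sub 1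
  have := hn.div hd h
  refine this.congr_deriv ?_
  unfold phiAux'
  field_simp
  ring

lemma exp_bounds_girth7 :
    Real.exp (-1/1.326) < 0.4704114 ∧ (0.4704113:ℝ) < Real.exp (-1/1.326) := by
  have hx : |(-1/1.326 : ℝ)| ≤ 1 := by rw [abs_le]; constructor <;> norm_num
  have hb := Real.exp_bound hx (n := 11) (by norm_num)
  have hs : ∑ m ∈ Finset.range 11, (-1/1.326:ℝ) ^ m / (m.factorial : ℝ) =
      4377197174428694221112852811883/9305042111462015888467954657383 := by
    simp [Finset.sum_range_succ, Nat.factorial]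
    norm_num
  rw [hs] at hb
  have habs : |(-1/1.326:ℝ)| = 500/663 := by rw [abs_of_nonpos] <;> norm_num
  rw [habs] at hb
  norm_num [Nat.factorial] at hb
  have herr : ((500:ℝ)/663)^11 * (12/439084800) ≤ 2/10^9 := by
    have : ((500:ℝ)/663)^11 ≤ 0.045 := by norm_num
    nlinarith
  have h2 := abs_le.mp hb
  constructor <;> nlinarith [h2.1, h2.2]

lemma key_poly_ineq (x : ℝ) (h1 : 0.123 ≤ x) (h2 : x ≤ 0.124) :
    (1/1.326)*(0.5295887:ℝ)^5*(x+1)^8 < x*(1-(0.5295887:ℝ)^2*(x+1)^2) := by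
  obtain ⟨t, ht0, ht1, rfl⟩ : ∃ t : ℝ, 0 ≤ t ∧ t ≤ 0.001 ∧ x = 0.123 + t :=
    ⟨x - 0.123, by linarith, by linarith, by ring⟩
  have hp : ∀ k : ℕ, t ^ k ≤ (0.001:ℝ) ^ k := fun k => pow_le_pow_left₀ ht0 ht1 k
  have h3 := hp 2; have h4 := hp 3; have h5 := hp 4; have h6 := hp 5
  have h7 := hp 6; have h8 := hp 7; have h9 := hp 8
  norm_num only at h3 h4 h5 h6 h7 h8 h9
  nlinarith [ht0, ht1, h3, h4, h5, h6, h7, h8, h9]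

set_option maxHeartbeats 1000000 in
/-- For `γ = 1.326`, `b = 1 - e^(-1/γ)`,
`φ(x) = (1/γ)·b⁵·(x+1)⁸ / (1 - b²·(x+1)²)` and `R = 1/b - 1`, there is a real
`τ` with `0 < τ < R` satisfying the characteristic equation
`φ(τ) - τ·φ'(τ) = 0` and such that `φ(τ)/τ < 1`. -/
theorem characteristic_root_girth7 :
    ∃ τ : ℝ, 0 < τ ∧
      τ < 1 / (1 - Real.exp (-1 / 1.326)) - 1 ∧
      (fun x : ℝ => (1 / 1.326) * (1 - Real.exp (-1 / 1.326)) ^ 5 * (x + 1) ^ 8 /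
          (1 - (1 - Real.exp (-1 / 1.326)) ^ 2 * (x + 1) ^ 2)) τ -
        τ * deriv (fun x : ℝ =>
          (1 / 1.326) * (1 - Real.exp (-1 / 1.326)) ^ 5 * (x + 1) ^ 8 /
            (1 - (1 - Real.exp (-1 / 1.326)) ^ 2 * (x + 1) ^ 2)) τ = 0 ∧
      (fun x : ℝ => (1 / 1.326) * (1 - Real.exp (-1 / 1.326)) ^ 5 * (x + 1) ^ 8 /
          (1 - (1 - Real.exp (-1 / 1.326)) ^ 2 * (x + 1) ^ 2)) τ / τ < 1 := by
  obtain ⟨hE1, hE2⟩ := exp_bounds_girth7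
  obtain ⟨b, hbdef⟩ : ∃ b : ℝ, b = 1 - Real.exp (-1 / 1.326) := ⟨_, rfl⟩
  rw [show (1 - Real.exp (-1 / 1.326)) = b from hbdef.symm]
  have hbl : (0.5295886:ℝ) < b := by rw [hbdef]; linarith
  have hbh : b < 0.5295887 := by rw [hbdef]; linarith
  have hb0 : (0:ℝ) < b := by linarith
  have hden : ∀ x : ℝ, 0.123 ≤ x → x ≤ 0.124 → 0 < 1 - b ^ 2 * (x + 1) ^ 2 := by
    intro x hx1 hx2
    have h1 : b ^ 2 < 0.2804642 := by nlinarith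
    have h2 : (x + 1) ^ 2 ≤ 1.263376 := by nlinarith
    nlinarith [mul_le_mul h1.le h2 (by positivity) (by norm_num : (0:ℝ) ≤ 0.2804642)]
  have hcont : ContinuousOn (fun x => phiAux b x - x * phiAux' b x)
      (Set.Icc 0.123 0.124) := by
    apply ContinuousOn.sub
    · exact ContinuousOn.div (by fun_prop) (by fun_prop)
        (fun x hx => (hden x hx.1 hx.2).ne')
    · exact (continuousOn_id.mul (ContinuousOn.div (by fun_prop) (by fun_prop)
        (fun x hx => pow_ne_zero 2 (hden x hx.1 hx.2).ne')))
  have hsign : ∀ x : ℝ, 0.123 ≤ x → x ≤ 0.124 →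
      phiAux b x - x * phiAux' b x =
      ((1/1.326) * b^5 * (x+1)^7) *
        (8 - 7*(x+1) + b^2*(x+1)^2*(5*(x+1) - 6)) / (1 - b^2*(x+1)^2)^2 := by
    intro x hx1 hx2
    have hd := (hden x hx1 hx2).ne'
    unfold phiAux phiAux'
    field_simp
    ring
  have hga : 0 < phiAux b 0.123 - 0.123 * phiAux' b 0.123 := by
    rw [hsign 0.123 le_rfl (by norm_num)]
    apply div_pos
    · apply mul_pos (by positivity)
      nlinarith
    · exact pow_pos (hden 0.123 le_rfl (by norm_num)) 2
  have hgb : phiAux b 0.124 - 0.124 * phiAux' b 0.124 < 0 := by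
    rw [hsign 0.124 (by norm_num) le_rfl]
    apply div_neg_of_neg_of_pos
    · apply mul_neg_of_pos_of_neg (by positivity)
      nlinarith
    · exact pow_pos (hden 0.124 (by norm_num) le_rfl) 2
  have hIVT := intermediate_value_Icc' (by norm_num : (0.123:ℝ) ≤ 0.124) hcont
  obtain ⟨τ, hτm, hτ⟩ := hIVT ⟨hgb.le, hga.le⟩
  obtain ⟨hτ1, hτ2⟩ := hτm
  have hτpos : (0:ℝ) < τ := by norm_num at hτ1; linarith
  have hdτ : 0 < 1 - b ^ 2 * (τ + 1) ^ 2 := hden τ hτ1 hτ2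
  refine ⟨τ, hτpos, ?_, ?_, ?_⟩
  · have h14 : (1.124:ℝ) < 1 / b := by
      rw [lt_div_iff₀ hb0]; nlinarith
    linarith
  · show phiAux b τ - τ * deriv (phiAux b) τ = 0
    rw [(phiAux_hasDerivAt b τ hdτ.ne').deriv]
    exact hτ
  · show phiAux b τ / τ < 1
    rw [div_lt_one hτpos]
    unfold phiAux
    rw [div_lt_iff₀ hdτ]
    have hkey := key_poly_ineq τ hτ1 hτ2
    have hb5 : b ^ 5 ≤ (0.5295887:ℝ) ^ 5 := by
      apply pow_le_pow_left₀ (le_of_lt hb0) (le_of_lt hbh)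
    have hb2 : b ^ 2 ≤ (0.5295887:ℝ) ^ 2 := by
      apply pow_le_pow_left₀ (le_of_lt hb0) (le_of_lt hbh)
    have hu8 : (0:ℝ) ≤ (τ+1)^8 := by positivity
    have hu2 : (0:ℝ) ≤ (τ+1)^2 := by positivity
    have ha : 1/1.326*b^5*(τ+1)^8 ≤ 1/1.326*(0.5295887:ℝ)^5*(τ+1)^8 := by
      linarith [mul_nonneg (sub_nonneg.2 hb5) hu8]
    have hb' : τ*(1-(0.5295887:ℝ)^2*(τ+1)^2) ≤ τ*(1-b^2*(τ+1)^2) := by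
      linarith [mul_nonneg (mul_nonneg hτpos.le (sub_nonneg.2 hb2)) hu2]
    linarith
end
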